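/- arXiv:1805.09063 — 4 statements merged into one kernel-verified Lean document; each statement's English description precedes it below -/
import Mathlib

section
/- Let G be a locally compact second countable group acting measurably and measure-preservingly on a standard Borel probability space (X, μ). If there exists a Borel function f : X → (0, ∞) such that Δ_G(g) = f(g·x)⁻¹ · f(x) for (λ_G × μ)-almost all (g, x) ∈ G × X, then G is unimodular. -/
/-!
By Fubini, for almost every `g` the cocycle identity `Δ g * f (g • x) = f x` holds for almost
every `x`. Since `x ↦ g • x` preserves the probability measure `μ`, this forces `Δ g = 1`; thus
`Δ` is trivial on a conull set, and a homomorphism that is trivial almost everywhere with respect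
to a left-invariant measure is trivial.
-/

open MeasureTheory

theorem integral_lt_integral_of_forall_lt {α : Type*} [MeasurableSpace α] {μ : Measure α}
    [NeZero μ] {f g : α → ℝ} (hf : Integrable f μ) (hg : Integrable g μ)
    (hfg : ∀ x, f x < g x) : ∫ x, f x ∂μ < ∫ x, g x ∂μ := by
  refine (integral_mono hf hg fun x => (hfg x).le).lt_of_ne fun heq => ?_
  obtain ⟨x, hx⟩ :=
    ((integral_eq_iff_of_ae_le hf hg (.of_forall fun x => (hfg x).le)).mp heq).exists
  exact (hfg x).ne hx

theorem integrable_arctan_comp {α : Type*} [MeasurableSpace α] {μ : Measure α}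
    [IsFiniteMeasure μ] {f : α → ℝ} (hf : Measurable f) :
    Integrable (fun x => Real.arctan (f x)) μ :=
  .of_bound (Real.continuous_arctan.measurable.comp hf).aestronglyMeasurable (Real.pi / 2)
    (.of_forall fun x => abs_le.mpr
      ⟨(Real.arctan_mem_Ioo (f x)).1.le, (Real.arctan_mem_Ioo (f x)).2.le⟩)

/-- `f` itself need not be integrable, but `arctan (t * f)` is, and its integral is unchanged by
`T`; when `t ≠ 1` the integrand lies strictly above or below `arctan ∘ f` everywhere. -/
theorem eq_one_of_ae_mul_comp_eq {α : Type*} [MeasurableSpace α] {μ : Measure α}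
    [IsFiniteMeasure μ] [NeZero μ] {T : α → α} (hT : MeasurePreserving T μ μ) {f : α → ℝ}
    (hf : Measurable f) (hfpos : ∀ x, 0 < f x) {t : ℝ} (h : ∀ᵐ x ∂μ, t * f (T x) = f x) :
    t = 1 := by
  have hint : ∀ s : ℝ, Integrable (fun x => Real.arctan (s * f x)) μ := fun s =>
    integrable_arctan_comp (hf.const_mul s)
  have hinv : ∫ x, Real.arctan (t * f x) ∂μ = ∫ x, Real.arctan (f x) ∂μ := by
    calc ∫ x, Real.arctan (t * f x) ∂μ = ∫ x, Real.arctan (t * f (T x)) ∂μ := by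
          conv_lhs => rw [← hT.map_eq]
          refine integral_map hT.aemeasurable ?_
          rw [hT.map_eq]
          exact (hint t).aestronglyMeasurable
      _ = ∫ x, Real.arctan (f x) ∂μ := integral_congr_ae (h.mono fun _ hx => congrArg _ hx)
  rcases lt_trichotomy t 1 with ht | ht | ht
  · refine absurd hinv (integral_lt_integral_of_forall_lt (hint t)
      (integrable_arctan_comp hf) fun x => Real.arctan_strictMono ?_).ne
    nlinarith [hfpos x]
  · exact ht
  · refine absurd hinv (integral_lt_integral_of_forall_lt (integrable_arctan_comp hf)
      (hint t) fun x => Real.arctan_strictMono ?_).ne'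
    nlinarith [hfpos x]

theorem MonoidHom.eq_one_of_ae_eq_one {G M : Type*} [Group G] [MeasurableSpace G]
    [MeasurableMul G] [Monoid M] {μ : Measure G} [μ.IsMulLeftInvariant] [NeZero μ]
    (Δ : G →* M) (h : ∀ᵐ g ∂μ, Δ g = 1) (g : G) : Δ g = 1 := by
  have h' : ∀ᵐ s ∂μ, Δ (g⁻¹ * s) = 1 :=
    (measurePreserving_mul_left μ g⁻¹).quasiMeasurePreserving.ae h
  obtain ⟨s, hs, hgs⟩ := (h.and h').exists
  calc Δ g = Δ g * Δ (g⁻¹ * s) := by rw [hgs, mul_one]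
    _ = Δ s := by rw [← map_mul, mul_inv_cancel_left]
    _ = 1 := hs

theorem stmt0_general {G X : Type*} [Group G] [TopologicalSpace G] [IsTopologicalGroup G]
    [LocallyCompactSpace G] [SecondCountableTopology G]
    [MeasurableSpace G] [BorelSpace G]
    [MeasurableSpace X] [MulAction G X]
    (lam : Measure G) [lam.IsHaarMeasure]
    (Δ : G →* ℝ)
    (μ : Measure X) [IsProbabilityMeasure μ]
    (hmeas : Measurable fun p : G × X => p.1 • p.2)
    (hmp : ∀ g : G, Measure.map (fun x => g • x) μ = μ)
    (f : X → ℝ) (hf : Measurable f) (hfpos : ∀ x, 0 < f x)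
    (hae : ∀ᵐ p : G × X ∂(lam.prod μ), Δ p.1 = (f (p.1 • p.2))⁻¹ * f p.2) :
    ∀ g : G, Δ g = 1 := by
  have hconull : ∀ᵐ g ∂lam, Δ g = 1 := by
    filter_upwards [Measure.ae_ae_of_ae_prod hae] with g hg
    refine eq_one_of_ae_mul_comp_eq (T := (g • ·)) ⟨hmeas.comp measurable_prodMk_left, hmp g⟩
      hf hfpos ?_
    filter_upwards [hg] with x hx
    rw [hx, mul_right_comm, inv_mul_cancel₀ (hfpos _).ne', one_mul]
  exact Δ.eq_one_of_ae_eq_one hconull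

/-- If `G` is a locally compact second countable group acting measurably and
measure-preservingly on a standard Borel probability space `(X, μ)`, and there is a Borel
function `f : X → (0,∞)` with `Δ_G(g) = f(g•x)⁻¹ * f(x)` for `(λ_G × μ)`-a.e. `(g,x)`,
then `G` is unimodular, i.e. the modular function is identically `1`. -/
theorem stmt0 {G X : Type*} [Group G] [TopologicalSpace G] [IsTopologicalGroup G]
    [LocallyCompactSpace G] [SecondCountableTopology G]
    [MeasurableSpace G] [BorelSpace G]
    [MeasurableSpace X] [StandardBorelSpace X] [MulAction G X]
    (lam : Measure G) [lam.IsHaarMeasure]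
    (Δ : G →* ℝ) (hΔpos : ∀ g, 0 < Δ g)
    (hΔ : ∀ g : G, Measure.map (fun x => x * g⁻¹) lam = ENNReal.ofReal (Δ g) • lam)
    (μ : Measure X) [IsProbabilityMeasure μ]
    (hmeas : Measurable fun p : G × X => p.1 • p.2)
    (hmp : ∀ g : G, Measure.map (fun x => g • x) μ = μ)
    (f : X → ℝ) (hf : Measurable f) (hfpos : ∀ x, 0 < f x)
    (hae : ∀ᵐ p : G × X ∂(lam.prod μ), Δ p.1 = (f (p.1 • p.2))⁻¹ * f p.2) :
    ∀ g : G, Δ g = 1 :=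
  stmt0_general lam Δ μ hmeas hmp f hf hfpos hae
end

section
/- Let G be a locally compact second countable group acting non-singularly on a standard Borel space X, and let ρ and η be equivalent quasi-invariant probability measures on X with Borel Radon–Nikodym derivative f = dη/dρ > 0. Given an ergodic decomposition ρ = ∫_Z ρ_z d(p_*ρ)(z) over a G-invariant Borel map p : X → Z, define g(z) := ∫_X f dρ_z. Then g is measurable, p_*ρ-almost everywhere finite and positive, and the measures η_z := (1/g(z)) f · ρ_z form an ergodic decomposition of η, i.e. η = ∫_Z η_z d(p_*η)(z); moreover η_z ∼ ρ_z for almost all z. -/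
/-!
Write `ν = p_*ρ`. The decomposition says `ρ = ν.bind ρ_z`, hence `f·ρ = ν.bind (f·ρ_z)`, and since
`ρ_z` lives on the fibre `p⁻¹{z}`, pushing forward gives `p_*η = g·ν`. Then
`∫ η_z d(p_*η) = ∫ g · g⁻¹ · (f·ρ_z) dν = η`, where `g < ∞` a.e. because `∫ g dν = η(X) = 1`.
Finally `η_z` is a positive multiple of `f·ρ_z` with `f > 0`, so it has the same null sets as `ρ_z`,
which transfers the support condition and ergodicity.
-/

open MeasureTheory Pointwise

/-- The measures `η_z := (1/g(z)) f · ρ_z`, where `g(z) = ∫ f dρ_z`. -/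
noncomputable def condDensityMeasure {X Z : Type*} [MeasurableSpace X]
    (f : X → ℝ) (ρz : Z → Measure X) (z : Z) : Measure X :=
  (∫⁻ x, ENNReal.ofReal (f x) ∂(ρz z))⁻¹ •
    ((ρz z).withDensity fun x => ENNReal.ofReal (f x))

open scoped ENNReal

section Bind

variable {X Z : Type*} [MeasurableSpace X] {κ : Z → Measure X}

theorem setLIntegral_preimage_of_measure_compl_fiber_eq_zero {p : X → Z} {z : Z}
    (hκz : κ z (p ⁻¹' {z})ᶜ = 0) (F : X → ℝ≥0∞) (A : Set Z) :
    ∫⁻ x in p ⁻¹' A, F x ∂κ z = A.indicator (fun z => ∫⁻ x, F x ∂κ z) z := by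
  by_cases hz : z ∈ A
  · have hA : p ⁻¹' A =ᵐ[κ z] (Set.univ : Set X) := ae_eq_univ.2 <|
      measure_mono_null (Set.compl_subset_compl.2 (Set.preimage_mono (by simpa))) hκz
    rw [setLIntegral_congr hA, setLIntegral_univ, Set.indicator_of_mem hz]
  · rw [Set.indicator_of_notMem hz]
    exact setLIntegral_measure_zero _ _ <|
      measure_mono_null (Set.preimage_mono (Set.subset_compl_singleton_iff.2 hz)) hκz

variable [MeasurableSpace Z] {ν : Measure Z}

theorem eq_bind_of_forall_apply_eq_lintegral {ρ : Measure X} (hκ : Measurable κ)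
    (h : ∀ s, MeasurableSet s → ρ s = ∫⁻ z, κ z s ∂ν) : ρ = ν.bind κ := by
  ext s hs
  rw [Measure.bind_apply hs hκ.aemeasurable, h s hs]

theorem withDensity_bind_apply (hκ : Measurable κ) {F : X → ℝ≥0∞} (hF : Measurable F)
    {s : Set X} (hs : MeasurableSet s) :
    (ν.bind κ).withDensity F s = ∫⁻ z, (κ z).withDensity F s ∂ν := by
  simp_rw [withDensity_apply _ hs, ← lintegral_indicator hs]
  exact Measure.lintegral_bind hκ.aemeasurable (hF.indicator hs).aemeasurable

theorem map_withDensity_bind (hκ : Measurable κ) {p : X → Z} (hp : Measurable p)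
    (hκp : ∀ z, κ z (p ⁻¹' {z})ᶜ = 0) {F : X → ℝ≥0∞} (hF : Measurable F) :
    ((ν.bind κ).withDensity F).map p = ν.withDensity fun z => ∫⁻ x, F x ∂κ z := by
  ext A hA
  rw [Measure.map_apply hp hA, withDensity_bind_apply hκ hF (hp hA), withDensity_apply _ hA,
    ← lintegral_indicator hA]
  simp_rw [withDensity_apply _ (hp hA),
    setLIntegral_preimage_of_measure_compl_fiber_eq_zero (hκp _)]

end Bind

theorem lintegral_ofReal_pos {X : Type*} [MeasurableSpace X] {μ : Measure X} [NeZero μ]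
    {f : X → ℝ} (hf : Measurable f) (hfpos : ∀ x, 0 < f x) :
    0 < ∫⁻ x, ENNReal.ofReal (f x) ∂μ := by
  have hsupp : Function.support (fun x => ENNReal.ofReal (f x)) = Set.univ :=
    Set.eq_univ_of_forall fun x => (ENNReal.ofReal_pos.2 (hfpos x)).ne'
  rw [lintegral_pos_iff_support hf.ennreal_ofReal, hsupp]
  exact Measure.measure_univ_pos.2 (NeZero.ne μ)

namespace condDensityMeasure

variable {X Z : Type*} [MeasurableSpace X] {f : X → ℝ} {ρz : Z → Measure X} {z : Z}

theorem apply (s : Set X) :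
    condDensityMeasure f ρz z s = (∫⁻ x, ENNReal.ofReal (f x) ∂ρz z)⁻¹ *
      (ρz z).withDensity (fun x => ENNReal.ofReal (f x)) s :=
  rfl

theorem absolutelyContinuous : condDensityMeasure f ρz z ≪ ρz z :=
  (withDensity_absolutelyContinuous _ _).smul_left _

theorem absolutelyContinuous_of_pos (hf : Measurable f) (hfpos : ∀ x, 0 < f x)
    (hg : ∫⁻ x, ENNReal.ofReal (f x) ∂ρz z ≠ ∞) : ρz z ≪ condDensityMeasure f ρz z :=
  (withDensity_absolutelyContinuous' hf.ennreal_ofReal.aemeasurable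
    (.of_forall fun x => (ENNReal.ofReal_pos.2 (hfpos x)).ne')).trans
    (Measure.absolutelyContinuous_smul (ENNReal.inv_ne_zero.2 hg))

theorem isProbabilityMeasure (h0 : ∫⁻ x, ENNReal.ofReal (f x) ∂ρz z ≠ 0)
    (htop : ∫⁻ x, ENNReal.ofReal (f x) ∂ρz z ≠ ∞) :
    IsProbabilityMeasure (condDensityMeasure f ρz z) := by
  constructor
  rw [apply, withDensity_apply _ MeasurableSet.univ, setLIntegral_univ,
    ENNReal.inv_mul_cancel h0 htop]

theorem lintegral_mul_apply (h0 : ∫⁻ x, ENNReal.ofReal (f x) ∂ρz z ≠ 0)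
    (htop : ∫⁻ x, ENNReal.ofReal (f x) ∂ρz z ≠ ∞) (s : Set X) :
    (∫⁻ x, ENNReal.ofReal (f x) ∂ρz z) * condDensityMeasure f ρz z s =
      (ρz z).withDensity (fun x => ENNReal.ofReal (f x)) s := by
  rw [apply, ← mul_assoc, ENNReal.mul_inv_cancel h0 htop, one_mul]

theorem measurable_apply [MeasurableSpace Z] (hρz : Measurable ρz) (hf : Measurable f)
    {s : Set X} (hs : MeasurableSet s) :
    Measurable fun z => condDensityMeasure f ρz z s := by
  simp_rw [apply, withDensity_apply _ hs, ← lintegral_indicator hs]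
  exact ((Measure.measurable_lintegral hf.ennreal_ofReal).comp hρz).inv.mul
    ((Measure.measurable_lintegral (hf.ennreal_ofReal.indicator hs)).comp hρz)

end condDensityMeasure

theorem stmt1_general {G X Z : Type*} [Group G] [MeasurableSpace X] [MeasurableSpace Z]
    [MulAction G X]
    (ρ η : Measure X) [IsProbabilityMeasure η]
    (f : X → ℝ) (hf : Measurable f) (hfpos : ∀ x, 0 < f x)
    (hη : η = ρ.withDensity fun x => ENNReal.ofReal (f x))
    (p : X → Z) (hp : Measurable p)
    (ρz : Z → Measure X)
    (hρzmeas : ∀ s : Set X, MeasurableSet s → Measurable fun z => ρz z s)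
    (hρzprob : ∀ z, IsProbabilityMeasure (ρz z))
    (hρzsupp : ∀ z, ρz z (p ⁻¹' {z})ᶜ = 0)
    (hρzerg : ∀ z, ∀ s : Set X, MeasurableSet s → (∀ γ : G, γ • s = s) →
      ρz z s = 0 ∨ ρz z sᶜ = 0)
    (hdec : ∀ s : Set X, MeasurableSet s → ρ s = ∫⁻ z, ρz z s ∂(ρ.map p)) :
    -- `g` is measurable
    (Measurable fun z => ∫⁻ x, ENNReal.ofReal (f x) ∂(ρz z)) ∧
    -- `g` is a.e. positive and finite
    (∀ᵐ z ∂(ρ.map p), 0 < ∫⁻ x, ENNReal.ofReal (f x) ∂(ρz z) ∧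
      ∫⁻ x, ENNReal.ofReal (f x) ∂(ρz z) < ⊤) ∧
    -- the `η_z` are a.e. probability measures supported in the fibers of `p`
    (∀ᵐ z ∂(ρ.map p), IsProbabilityMeasure (condDensityMeasure f ρz z) ∧
      condDensityMeasure f ρz z (p ⁻¹' {z})ᶜ = 0) ∧
    -- the `η_z` are a.e. ergodic
    (∀ᵐ z ∂(ρ.map p), ∀ s : Set X, MeasurableSet s → (∀ γ : G, γ • s = s) →
      condDensityMeasure f ρz z s = 0 ∨ condDensityMeasure f ρz z sᶜ = 0) ∧
    -- `η = ∫_Z η_z d(p_*η)(z)`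
    (∀ s : Set X, MeasurableSet s →
      η s = ∫⁻ z, condDensityMeasure f ρz z s ∂(η.map p)) ∧
    -- `η_z ∼ ρ_z` for almost all `z`
    (∀ᵐ z ∂(ρ.map p), condDensityMeasure f ρz z ≪ ρz z ∧
      ρz z ≪ condDensityMeasure f ρz z) := by
  set ν := ρ.map p
  set g : Z → ℝ≥0∞ := fun z => ∫⁻ x, ENNReal.ofReal (f x) ∂ρz z
  have hρz : Measurable ρz := Measure.measurable_of_measurable_coe _ hρzmeas
  have hην : η = (ν.bind ρz).withDensity fun x => ENNReal.ofReal (f x) := by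
    rwa [← eq_bind_of_forall_apply_eq_lintegral hρz hdec]
  have hηp : η.map p = ν.withDensity g := by
    rw [hην]
    exact map_withDensity_bind hρz hp hρzsupp hf.ennreal_ofReal
  have hg : Measurable g := (Measure.measurable_lintegral hf.ennreal_ofReal).comp hρz
  have hg_top : ∀ᵐ z ∂ν, g z < ∞ := by
    have := Measure.isProbabilityMeasure_map (μ := η) hp.aemeasurable
    refine ae_lt_top hg (ne_of_eq_of_ne ?_ ENNReal.one_ne_top)
    rw [← setLIntegral_univ, ← withDensity_apply _ MeasurableSet.univ, ← hηp, measure_univ]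
  have hg_pos : ∀ z, 0 < g z := fun z => lintegral_ofReal_pos hf hfpos
  refine ⟨hg, hg_top.mono fun z hz => ⟨hg_pos z, hz⟩, ?_, ?_, ?_, ?_⟩
  · filter_upwards [hg_top] with z hz
    exact ⟨condDensityMeasure.isProbabilityMeasure (hg_pos z).ne' hz.ne,
      condDensityMeasure.absolutelyContinuous (hρzsupp z)⟩
  · exact .of_forall fun z s hs hs_inv => (hρzerg z s hs hs_inv).imp
      (fun h => condDensityMeasure.absolutelyContinuous h)
      (fun h => condDensityMeasure.absolutelyContinuous h)
  · intro s hs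
    rw [hηp, lintegral_withDensity_eq_lintegral_mul _ hg
      (condDensityMeasure.measurable_apply hρz hf hs), hην,
      withDensity_bind_apply hρz hf.ennreal_ofReal hs]
    refine lintegral_congr_ae ?_
    filter_upwards [hg_top] with z hz
    exact (condDensityMeasure.lintegral_mul_apply (hg_pos z).ne' hz.ne s).symm
  · filter_upwards [hg_top] with z hz
    exact ⟨condDensityMeasure.absolutelyContinuous,
      condDensityMeasure.absolutelyContinuous_of_pos hf hfpos hz.ne⟩

/-- given an ergodic decomposition `ρ = ∫_Z ρ_z d(p_*ρ)(z)` of a quasi-invariant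
probability measure `ρ` and an equivalent measure `η = f·ρ` with `f > 0` Borel, the function
`g(z) = ∫ f dρ_z` is measurable, a.e. finite and positive, and `η_z := (1/g(z)) f·ρ_z` is an
ergodic decomposition of `η`; moreover `η_z ∼ ρ_z` for almost all `z`. -/
theorem stmt1 {G X Z : Type*} [Group G] [MeasurableSpace X] [MeasurableSpace Z]
    [MulAction G X]
    (ρ η : Measure X) [IsProbabilityMeasure ρ] [IsProbabilityMeasure η]
    (hqi : ∀ γ : G, Measure.map (fun x => γ • x) ρ ≪ ρ ∧ ρ ≪ Measure.map (fun x => γ • x) ρ)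
    (f : X → ℝ) (hf : Measurable f) (hfpos : ∀ x, 0 < f x)
    (hη : η = ρ.withDensity fun x => ENNReal.ofReal (f x))
    (p : X → Z) (hp : Measurable p) (hpinv : ∀ (γ : G) (x : X), p (γ • x) = p x)
    (ρz : Z → Measure X)
    (hρzmeas : ∀ s : Set X, MeasurableSet s → Measurable fun z => ρz z s)
    (hρzprob : ∀ z, IsProbabilityMeasure (ρz z))
    (hρzsupp : ∀ z, ρz z (p ⁻¹' {z})ᶜ = 0)
    (hρzerg : ∀ z, ∀ s : Set X, MeasurableSet s → (∀ γ : G, γ • s = s) →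
      ρz z s = 0 ∨ ρz z sᶜ = 0)
    (hdec : ∀ s : Set X, MeasurableSet s → ρ s = ∫⁻ z, ρz z s ∂(ρ.map p)) :
    -- `g` is measurable
    (Measurable fun z => ∫⁻ x, ENNReal.ofReal (f x) ∂(ρz z)) ∧
    -- `g` is a.e. positive and finite
    (∀ᵐ z ∂(ρ.map p), 0 < ∫⁻ x, ENNReal.ofReal (f x) ∂(ρz z) ∧
      ∫⁻ x, ENNReal.ofReal (f x) ∂(ρz z) < ⊤) ∧
    -- the `η_z` are a.e. probability measures supported in the fibers of `p`
    (∀ᵐ z ∂(ρ.map p), IsProbabilityMeasure (condDensityMeasure f ρz z) ∧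
      condDensityMeasure f ρz z (p ⁻¹' {z})ᶜ = 0) ∧
    -- the `η_z` are a.e. ergodic
    (∀ᵐ z ∂(ρ.map p), ∀ s : Set X, MeasurableSet s → (∀ γ : G, γ • s = s) →
      condDensityMeasure f ρz z s = 0 ∨ condDensityMeasure f ρz z sᶜ = 0) ∧
    -- `η = ∫_Z η_z d(p_*η)(z)`
    (∀ s : Set X, MeasurableSet s →
      η s = ∫⁻ z, condDensityMeasure f ρz z s ∂(η.map p)) ∧
    -- `η_z ∼ ρ_z` for almost all `z`
    (∀ᵐ z ∂(ρ.map p), condDensityMeasure f ρz z ≪ ρz z ∧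
      ρz z ≪ condDensityMeasure f ρz z) :=
  stmt1_general ρ η f hf hfpos hη p hp ρz hρzmeas hρzprob hρzsupp hρzerg hdec
end

section
/- If s₀ ≠ 1, the subgroup H = {[[s₀ⁿ, b],[0,1]] : n ∈ ℤ, b ∈ ℝ} is a closed cocompact subgroup of the ax+b group H̃ = {[[s, b],[0,1]] : s > 0, b ∈ ℝ}, and the modular function of H̃ restricted to H equals the modular function of H (both given by [[s,b],[0,1]] ↦ s⁻¹). -/
/-!
In logarithmic coordinates `(log s, b)` the `ax+b` group is `ℝ ⋉ ℝ`, and `H` is the preimage of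
the discrete subgroup `ℤ t`, `t = log s₀`, under `g ↦ log s`. So `H` is closed, and every coset
`g H` meets the compact arc `{diag(eᵘ, 1) : 0 ≤ u ≤ |t|}`, which gives cocompactness.
As a space `H` is a disjoint union of the lines `s = e^{n t}`; giving the `n`-th line the Lebesgue
measure with weight `e^{-n t}` yields a left Haar measure, because left translation by
`(e^{m t}, a)` acts on the line coordinate by `b ↦ e^{m t} b + a`. Right translation by the same
element only shifts the line coordinate and the line index, so it multiplies this measure by
`e^{m t}`; by uniqueness of Haar measure the same factor works for every Haar measure on `H`.
-/

open Matrix MeasureTheory Topology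
open scoped ENNReal

instance {X : Type*} [TopologicalSpace X] [SecondCountableTopology X] :
    SecondCountableTopology Xᵐᵒᵖ :=
  MulOpposite.opHomeomorph.symm.isEmbedding.secondCountableTopology

instance {m n R : Type*} [Countable m] [Countable n] [TopologicalSpace R]
    [SecondCountableTopology R] : SecondCountableTopology (Matrix m n R) :=
  inferInstanceAs (SecondCountableTopology (m → n → R))

instance {n R : Type*} [Fintype n] [DecidableEq n] [CommRing R] [TopologicalSpace R]
    [SecondCountableTopology R] : SecondCountableTopology (GL n R) :=
  Units.isEmbedding_embedProduct.secondCountableTopology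

instance {X : Type*} [TopologicalSpace X] [SecondCountableTopology X] (p : X → Prop) :
    SecondCountableTopology (Subtype p) :=
  IsInducing.subtypeVal.secondCountableTopology

lemma Continuous.generalLinearGroup_mkOfDetNeZero {X n K : Type*} [TopologicalSpace X]
    [Fintype n] [DecidableEq n] [Field K] [TopologicalSpace K] [IsTopologicalRing K]
    [ContinuousInv₀ K] {A : X → Matrix n n K} (hA : Continuous A) (hdet : ∀ x, (A x).det ≠ 0) :
    Continuous fun x => GeneralLinearGroup.mkOfDetNeZero (A x) (hdet x) := by
  refine Units.continuous_iff.2 ⟨hA, ?_⟩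
  simp only [Matrix.coe_units_inv]
  show Continuous fun x => (A x)⁻¹
  simp only [Matrix.inv_def, Ring.inverse_eq_inv']
  exact (hA.matrix_det.inv₀ hdet).smul hA.matrix_adjugate

lemma exists_zpow_eq_iff_log_mem_zmultiples {a s : ℝ} (ha : 0 < a) (hs : 0 < s) :
    (∃ n : ℤ, s = a ^ n) ↔ Real.log s ∈ AddSubgroup.zmultiples (Real.log a) := by
  simp only [AddSubgroup.mem_zmultiples_iff, zsmul_eq_mul, eq_comm (b := Real.log s)]
  refine exists_congr fun n => ?_
  rw [← Real.log_zpow, Real.log_injOn_pos.eq_iff hs (zpow_pos ha n)]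

lemma Real.map_volume_mul_add {a : ℝ} (ha : a ≠ 0) (c : ℝ) :
    Measure.map (fun x => a * x + c) volume = ENNReal.ofReal |a⁻¹| • volume := by
  change Measure.map ((· + c) ∘ (a * ·)) volume = _
  rw [← Measure.map_map (measurable_add_const c) (measurable_const_mul a),
    Real.map_volume_mul_left ha, Measure.map_smul, map_add_right_eq_self]

lemma MeasureTheory.Measure.map_sum_eq_smul_of_shift {α ι : Type*} [MeasurableSpace α] [AddGroup ι]
    {μ : ι → Measure α} {F : α → α} (hF : Measurable F) (m : ι) (c : ℝ≥0∞)
    (h : ∀ n, Measure.map F (μ n) = c • μ (n + m)) :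
    Measure.map F (Measure.sum μ) = c • Measure.sum μ := by
  rw [Measure.map_sum hF.aemeasurable]
  ext s hs
  simp only [Measure.sum_apply _ hs, h, Measure.smul_apply, smul_eq_mul, ENNReal.tsum_mul_left]
  congr 1
  exact (Equiv.addRight m).tsum_eq fun n => μ n s

lemma MeasureTheory.Measure.map_mul_right_eq_smul_of_isHaarMeasure {G : Type*} [Group G]
    [TopologicalSpace G] [IsTopologicalGroup G] [LocallyCompactSpace G] [SecondCountableTopology G]
    [MeasurableSpace G] [BorelSpace G] (μ ν : Measure G) [μ.IsHaarMeasure] [ν.IsHaarMeasure]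
    {g : G} {c : ℝ≥0∞} (h : Measure.map (· * g) ν = c • ν) :
    Measure.map (· * g) μ = c • μ := by
  rw [Measure.isMulLeftInvariant_eq_smul μ ν, Measure.map_smul, h, smul_comm]

lemma mul_entries_of_bottom_row {M N : Matrix (Fin 2) (Fin 2) ℝ} (hM₁₀ : M 1 0 = 0)
    (hM₁₁ : M 1 1 = 1) (hN₁₀ : N 1 0 = 0) (hN₁₁ : N 1 1 = 1) :
    (M * N) 1 0 = 0 ∧ (M * N) 1 1 = 1 ∧ (M * N) 0 0 = M 0 0 * N 0 0 := by
  simp [Matrix.mul_apply, Fin.sum_univ_two, hM₁₀, hM₁₁, hN₁₀, hN₁₁]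

lemma inv_entries_of_bottom_row {M : GL (Fin 2) ℝ} (h₁₀ : M 1 0 = 0) (h₁₁ : M 1 1 = 1) :
    M⁻¹ 1 0 = 0 ∧ M⁻¹ 1 1 = 1 ∧ M⁻¹ 0 0 = (M 0 0)⁻¹ := by
  have hdet : (M : Matrix (Fin 2) (Fin 2) ℝ).det = M 0 0 := by simp [det_fin_two, h₁₀, h₁₁]
  have h₀₀ : M 0 0 ≠ 0 := hdet ▸ (isUnits_det_units M).ne_zero
  rw [Matrix.coe_units_inv, Matrix.inv_def, hdet, adjugate_fin_two]
  simp [h₁₀, h₁₁, h₀₀]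

def affineGroup : Subgroup (GL (Fin 2) ℝ) where
  carrier := {M | M 1 0 = 0 ∧ M 1 1 = 1 ∧ 0 < M 0 0}
  one_mem' := by simp
  mul_mem' := by
    rintro M N ⟨hM₁₀, hM₁₁, hM₀₀⟩ ⟨hN₁₀, hN₁₁, hN₀₀⟩
    obtain ⟨h₁₀, h₁₁, h₀₀⟩ := mul_entries_of_bottom_row hM₁₀ hM₁₁ hN₁₀ hN₁₁
    exact ⟨h₁₀, h₁₁, by rw [Units.val_mul, h₀₀]; exact mul_pos hM₀₀ hN₀₀⟩
  inv_mem' := by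
    rintro M ⟨hM₁₀, hM₁₁, hM₀₀⟩
    obtain ⟨h₁₀, h₁₁, h₀₀⟩ := inv_entries_of_bottom_row hM₁₀ hM₁₁
    exact ⟨h₁₀, h₁₁, h₀₀ ▸ inv_pos.2 hM₀₀⟩

namespace affineGroup

lemma apply_zero_zero_pos {M : GL (Fin 2) ℝ} (hM : M ∈ affineGroup) : 0 < M 0 0 := hM.2.2

lemma mul_apply_zero_zero {M N : GL (Fin 2) ℝ} (hM : M ∈ affineGroup) (hN : N ∈ affineGroup) :
    (M * N) 0 0 = M 0 0 * N 0 0 :=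
  (mul_entries_of_bottom_row hM.1 hM.2.1 hN.1 hN.2.1).2.2

lemma inv_apply_zero_zero {M : GL (Fin 2) ℝ} (hM : M ∈ affineGroup) : M⁻¹ 0 0 = (M 0 0)⁻¹ :=
  (inv_entries_of_bottom_row hM.1 hM.2.1).2.2

noncomputable def mk (s b : ℝ) (hs : 0 < s) : affineGroup :=
  ⟨.mkOfDetNeZero !![s, b; 0, 1] (by simp [hs.ne']), ⟨rfl, rfl, hs⟩⟩

@[simp] lemma coe_mk (s b : ℝ) (hs : 0 < s) :
    (((mk s b hs : affineGroup) : GL (Fin 2) ℝ) : Matrix (Fin 2) (Fin 2) ℝ) = !![s, b; 0, 1] :=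
  rfl

lemma eq_mk (g : affineGroup) :
    g = mk ((g : GL (Fin 2) ℝ) 0 0) ((g : GL (Fin 2) ℝ) 0 1) (apply_zero_zero_pos g.2) := by
  refine Subtype.ext (Units.ext ?_)
  rw [coe_mk, ← g.2.1, ← g.2.2.1]
  exact Matrix.eta_fin_two _

lemma mk_mul_mk {s b s' b' : ℝ} (hs : 0 < s) (hs' : 0 < s') :
    mk s b hs * mk s' b' hs' = mk (s * s') (s * b' + b) (mul_pos hs hs') := by
  refine Subtype.ext (Units.ext ?_)
  simp

lemma continuous_mk {X : Type*} [TopologicalSpace X] {f g : X → ℝ} (hf : Continuous f)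
    (hg : Continuous g) (hpos : ∀ x, 0 < f x) :
    Continuous fun x => mk (f x) (g x) (hpos x) :=
  (Continuous.generalLinearGroup_mkOfDetNeZero (by fun_prop) _).subtype_mk _

lemma continuous_log_apply_zero_zero :
    Continuous fun g : affineGroup => Real.log ((g : GL (Fin 2) ℝ) 0 0) :=
  Continuous.log (by fun_prop) fun g => (apply_zero_zero_pos g.2).ne'

end affineGroup

/-- `{[[s, b], [0, 1]] : s ∈ exp (ℤ t)}`; with `t = log s₀` this is `{[[s₀ⁿ, b], [0, 1]]}`. -/
def affineLattice (t : ℝ) : Subgroup (GL (Fin 2) ℝ) where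
  carrier := {M | M ∈ affineGroup ∧ Real.log (M 0 0) ∈ AddSubgroup.zmultiples t}
  one_mem' := ⟨one_mem _, by simp⟩
  mul_mem' := by
    rintro M N ⟨hM, hMt⟩ ⟨hN, hNt⟩
    refine ⟨mul_mem hM hN, ?_⟩
    rw [affineGroup.mul_apply_zero_zero hM hN, Real.log_mul
      (affineGroup.apply_zero_zero_pos hM).ne' (affineGroup.apply_zero_zero_pos hN).ne']
    exact add_mem hMt hNt
  inv_mem' := by
    rintro M ⟨hM, hMt⟩
    refine ⟨inv_mem hM, ?_⟩
    rw [affineGroup.inv_apply_zero_zero hM, Real.log_inv]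
    exact neg_mem hMt

lemma mem_affineLattice_log_iff {s₀ : ℝ} (hs₀ : 0 < s₀) (M : GL (Fin 2) ℝ) :
    M ∈ affineLattice (Real.log s₀) ↔ M 1 0 = 0 ∧ M 1 1 = 1 ∧ ∃ n : ℤ, M 0 0 = s₀ ^ n := by
  constructor
  · rintro ⟨⟨h₁₀, h₁₁, h₀₀⟩, hlog⟩
    exact ⟨h₁₀, h₁₁, (exists_zpow_eq_iff_log_mem_zmultiples hs₀ h₀₀).2 hlog⟩
  · rintro ⟨h₁₀, h₁₁, n, hn⟩
    have h₀₀ : 0 < M 0 0 := hn ▸ zpow_pos hs₀ n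
    exact ⟨⟨h₁₀, h₁₁, h₀₀⟩, (exists_zpow_eq_iff_log_mem_zmultiples hs₀ h₀₀).1 ⟨n, hn⟩⟩

section Lattice

variable (t : ℝ)

abbrev latticeIn : Subgroup affineGroup := (affineLattice t).subgroupOf affineGroup

variable {t}

lemma mem_latticeIn_iff {g : affineGroup} :
    g ∈ latticeIn t ↔ Real.log ((g : GL (Fin 2) ℝ) 0 0) ∈ AddSubgroup.zmultiples t :=
  ⟨fun h => h.2, fun h => ⟨g.2, h⟩⟩

variable (t)

noncomputable def latticeMk (n : ℤ) (b : ℝ) : latticeIn t :=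
  ⟨affineGroup.mk (Real.exp (n * t)) b (Real.exp_pos _),
    mem_latticeIn_iff.2 ⟨n, by simp⟩⟩

lemma coe_latticeMk (n : ℤ) (b : ℝ) :
    (latticeMk t n b : affineGroup) = affineGroup.mk (Real.exp (n * t)) b (Real.exp_pos _) := rfl

@[simp] lemma latticeMk_apply_zero_zero (n : ℤ) (b : ℝ) :
    ((latticeMk t n b : affineGroup) : GL (Fin 2) ℝ) 0 0 = Real.exp (n * t) := rfl

@[simp] lemma latticeMk_apply_zero_one (n : ℤ) (b : ℝ) :
    ((latticeMk t n b : affineGroup) : GL (Fin 2) ℝ) 0 1 = b := rfl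

lemma latticeMk_mul_latticeMk (n m : ℤ) (b c : ℝ) :
    latticeMk t n b * latticeMk t m c = latticeMk t (n + m) (Real.exp (n * t) * c + b) := by
  refine Subtype.ext ?_
  simp only [Subgroup.coe_mul, coe_latticeMk, affineGroup.mk_mul_mk, ← Real.exp_add,
    Int.cast_add, add_mul]

lemma exists_eq_latticeMk (g : latticeIn t) : ∃ n b, g = latticeMk t n b := by
  obtain ⟨n, hn⟩ := AddSubgroup.mem_zmultiples_iff.1 (mem_latticeIn_iff.1 g.2)
  refine ⟨n, (g : GL (Fin 2) ℝ) 0 1, Subtype.ext ?_⟩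
  rw [affineGroup.eq_mk g]
  congr
  rw [← zsmul_eq_mul, hn, Real.exp_log (affineGroup.apply_zero_zero_pos g.1.2)]

lemma continuous_latticeMk (n : ℤ) : Continuous (latticeMk t n) :=
  (affineGroup.continuous_mk continuous_const continuous_id _).subtype_mk _

variable {t}

lemma latticeMk_inj (ht : t ≠ 0) {n m : ℤ} {b c : ℝ} :
    latticeMk t n b = latticeMk t m c ↔ n = m ∧ b = c := by
  refine ⟨fun h => ?_, by rintro ⟨rfl, rfl⟩; rfl⟩
  have h' := congrArg (fun g : latticeIn t => (((g : affineGroup) : GL (Fin 2) ℝ) :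
    Matrix (Fin 2) (Fin 2) ℝ)) h
  simp only [coe_latticeMk, affineGroup.coe_mk] at h'
  have h₀₀ : Real.exp (n * t) = Real.exp (m * t) := by simpa using congrFun (congrFun h' 0) 0
  have h₀₁ : b = c := by simpa using congrFun (congrFun h' 0) 1
  exact ⟨by exact_mod_cast mul_right_cancel₀ ht (Real.exp_injective h₀₀), h₀₁⟩

variable (t) in
lemma isClosed_latticeIn : IsClosed (latticeIn t : Set affineGroup) := by
  have : (latticeIn t : Set affineGroup) =
      (fun g : affineGroup => Real.log ((g : GL (Fin 2) ℝ) 0 0)) ⁻¹' AddSubgroup.zmultiples t := by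
    ext g
    exact mem_latticeIn_iff
  rw [this]
  exact AddSubgroup.isClosed_of_discrete.preimage
    affineGroup.continuous_log_apply_zero_zero

lemma mk_exp_inv_mul_mem_latticeIn {g : affineGroup} {u : ℝ}
    (hu : Real.log ((g : GL (Fin 2) ℝ) 0 0) - u ∈ AddSubgroup.zmultiples t) :
    (affineGroup.mk (Real.exp u) 0 (Real.exp_pos u))⁻¹ * g ∈ latticeIn t := by
  refine mem_latticeIn_iff.2 ?_
  rw [Subgroup.coe_mul, Subgroup.coe_inv, affineGroup.mul_apply_zero_zero (inv_mem (Subtype.prop _))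
    g.2, affineGroup.inv_apply_zero_zero (Subtype.prop _)]
  change Real.log ((Real.exp u)⁻¹ * _) ∈ _
  rwa [Real.log_mul (inv_ne_zero (Real.exp_pos u).ne') (affineGroup.apply_zero_zero_pos g.2).ne',
    Real.log_inv, Real.log_exp, neg_add_eq_sub]

lemma compactSpace_quotient_latticeIn (ht : t ≠ 0) : CompactSpace (affineGroup ⧸ latticeIn t) := by
  have hp : 0 < |t| := abs_pos.2 ht
  have habs : |t| ∈ AddSubgroup.zmultiples t := by
    rcases abs_choice t with h | h <;> rw [h]
    exacts [AddSubgroup.mem_zmultiples t, neg_mem (AddSubgroup.mem_zmultiples t)]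
  let δ : ℝ → affineGroup := fun u => affineGroup.mk (Real.exp u) 0 (Real.exp_pos u)
  have hδ : Continuous δ := affineGroup.continuous_mk Real.continuous_exp continuous_const _
  have hcover :
      QuotientGroup.mk '' (δ '' Set.Icc 0 |t|) = (Set.univ : Set (affineGroup ⧸ latticeIn t)) := by
    refine Set.eq_univ_of_forall fun q => QuotientGroup.induction_on q fun g => ?_
    set u := toIcoMod hp 0 (Real.log ((g : GL (Fin 2) ℝ) 0 0))
    have hu : u ∈ Set.Icc 0 |t| := Set.Ico_subset_Icc_self (by simpa using toIcoMod_mem_Ico hp 0 _)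
    refine ⟨δ u, ⟨u, hu, rfl⟩, QuotientGroup.eq.2 (mk_exp_inv_mul_mem_latticeIn ?_)⟩
    rw [self_sub_toIcoMod]
    exact AddSubgroup.zsmul_mem _ habs _
  rw [← isCompact_univ_iff, ← hcover]
  exact (isCompact_Icc.image hδ).image continuous_quotient_mk'

lemma latticeMk_image_Icc_mem_nhds_one (ht : t ≠ 0) :
    latticeMk t 0 '' Set.Icc (-1) 1 ∈ 𝓝 (1 : latticeIn t) := by
  let V : Set (latticeIn t) :=
    (fun g => |Real.log ((g : GL (Fin 2) ℝ) 0 0)|) ⁻¹' Set.Iio |t| ∩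
      (fun g => (g : GL (Fin 2) ℝ) 0 1) ⁻¹' Set.Ioo (-1) 1
  have hV : IsOpen V :=
    (isOpen_Iio.preimage
      (affineGroup.continuous_log_apply_zero_zero.comp continuous_subtype_val).abs).inter
        (isOpen_Ioo.preimage (by fun_prop))
  have h1 : (1 : latticeIn t) ∈ V := by simp [V, abs_pos.2 ht]
  refine Filter.mem_of_superset (hV.mem_nhds h1) ?_
  rintro g ⟨hg₀₀, hg₀₁⟩
  obtain ⟨n, b, rfl⟩ := exists_eq_latticeMk t g
  simp only [Set.mem_preimage, Set.mem_Iio, latticeMk_apply_zero_zero, latticeMk_apply_zero_one,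
    Real.log_exp, abs_mul] at hg₀₀ hg₀₁
  have hn : n = 0 := by
    have : |(n : ℝ)| < 1 := (mul_lt_iff_lt_one_left (abs_pos.2 ht)).1 hg₀₀
    exact Int.abs_lt_one_iff.1 (by exact_mod_cast this)
  exact ⟨b, Set.Ioo_subset_Icc_self hg₀₁, by rw [hn]⟩

lemma locallyCompactSpace_latticeIn (ht : t ≠ 0) : LocallyCompactSpace (latticeIn t) :=
  (isCompact_Icc.image (continuous_latticeMk t 0)).locallyCompactSpace_of_mem_nhds_of_group
    (latticeMk_image_Icc_mem_nhds_one ht)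

section Haar

variable [MeasurableSpace (latticeIn t)] [BorelSpace (latticeIn t)]

variable (t) in
noncomputable def latticeHaar : Measure (latticeIn t) :=
  Measure.sum fun n : ℤ => ENNReal.ofReal (Real.exp (-(n * t))) • volume.map (latticeMk t n)

lemma map_smul_map_latticeMk {F : latticeIn t → latticeIn t} (hF : Measurable F) {n k : ℤ}
    {φ : ℝ → ℝ} (hφ : Measurable φ) (hFφ : ∀ b, F (latticeMk t n b) = latticeMk t k (φ b))
    (c : ℝ≥0∞) :
    Measure.map F (c • volume.map (latticeMk t n)) = c • (volume.map φ).map (latticeMk t k) := by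
  rw [Measure.map_smul, Measure.map_map hF (continuous_latticeMk t n).measurable,
    Measure.map_map (continuous_latticeMk t k).measurable hφ]
  congr 2
  exact funext hFφ

lemma map_mul_left_latticeHaar (g : latticeIn t) :
    Measure.map (g * ·) (latticeHaar t) = latticeHaar t := by
  obtain ⟨m, a, rfl⟩ := exists_eq_latticeMk t g
  refine (Measure.map_sum_eq_smul_of_shift (measurable_const_mul (latticeMk t m a)) m 1
    fun n => ?_).trans (one_smul _ _)
  rw [map_smul_map_latticeMk (measurable_const_mul (latticeMk t m a))
    ((measurable_const_mul (Real.exp (m * t))).add_const a)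
    (fun b => latticeMk_mul_latticeMk t m n a b), Real.map_volume_mul_add (Real.exp_pos _).ne',
    Measure.map_smul, smul_smul, one_smul, add_comm m n, abs_of_pos (inv_pos.2 (Real.exp_pos _)),
    ← Real.exp_neg, ← ENNReal.ofReal_mul (Real.exp_pos _).le, ← Real.exp_add]
  congr 3
  push_cast
  ring

lemma map_mul_right_latticeHaar (g : latticeIn t) :
    Measure.map (· * g) (latticeHaar t) =
      ENNReal.ofReal ((g : GL (Fin 2) ℝ) 0 0) • latticeHaar t := by
  obtain ⟨m, a, rfl⟩ := exists_eq_latticeMk t g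
  refine Measure.map_sum_eq_smul_of_shift (measurable_mul_const (latticeMk t m a)) m _ fun n => ?_
  rw [map_smul_map_latticeMk (measurable_mul_const (latticeMk t m a)) (measurable_const_add _)
    (fun b => latticeMk_mul_latticeMk t n m b a), map_add_left_eq_self, latticeMk_apply_zero_zero,
    smul_smul, ← ENNReal.ofReal_mul (Real.exp_pos _).le, ← Real.exp_add]
  congr 3
  push_cast
  ring

lemma latticeHaar_image_latticeMk_zero (ht : t ≠ 0) {s : Set ℝ}
    (hs : MeasurableSet (latticeMk t 0 '' s)) : latticeHaar t (latticeMk t 0 '' s) = volume s := by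
  rw [latticeHaar, Measure.sum_apply _ hs, tsum_eq_single 0]
  · have hinj : Function.Injective (latticeMk t 0) := fun b c h => ((latticeMk_inj ht).1 h).2
    simp [Measure.map_apply (continuous_latticeMk t 0).measurable hs, hinj.preimage_image]
  · intro n hn
    have : latticeMk t n ⁻¹' (latticeMk t 0 '' s) = ∅ :=
      Set.eq_empty_of_forall_notMem fun b ⟨c, _, h⟩ => hn ((latticeMk_inj ht).1 h).1.symm
    simp [Measure.map_apply (continuous_latticeMk t n).measurable hs, this]

lemma isHaarMeasure_latticeHaar (ht : t ≠ 0) : (latticeHaar t).IsHaarMeasure := by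
  have : (latticeHaar t).IsMulLeftInvariant := ⟨map_mul_left_latticeHaar⟩
  have hC := (isCompact_Icc (a := (-1 : ℝ)) (b := 1)).image (continuous_latticeMk t 0)
  refine Measure.isHaarMeasure_of_isCompact_nonempty_interior _ _ hC
    ⟨1, mem_interior_iff_mem_nhds.2 (latticeMk_image_Icc_mem_nhds_one ht)⟩ ?_ ?_ <;>
  simp [latticeHaar_image_latticeMk_zero ht hC.measurableSet]

end Haar

end Lattice

theorem stmt6_general (s₀ : ℝ) (hs₀pos : 0 < s₀) (hs₀ : s₀ ≠ 1)
    (Ht K : Subgroup (GL (Fin 2) ℝ))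
    (hHt : ∀ M : GL (Fin 2) ℝ, M ∈ Ht ↔
      ((M : Matrix (Fin 2) (Fin 2) ℝ) 1 0 = 0 ∧
       (M : Matrix (Fin 2) (Fin 2) ℝ) 1 1 = 1 ∧
       0 < (M : Matrix (Fin 2) (Fin 2) ℝ) 0 0))
    (hK : ∀ M : GL (Fin 2) ℝ, M ∈ K ↔
      ((M : Matrix (Fin 2) (Fin 2) ℝ) 1 0 = 0 ∧
       (M : Matrix (Fin 2) (Fin 2) ℝ) 1 1 = 1 ∧
       ∃ n : ℤ, (M : Matrix (Fin 2) (Fin 2) ℝ) 0 0 = s₀ ^ n))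
    [MeasurableSpace ↥(K.subgroupOf Ht)] [BorelSpace ↥(K.subgroupOf Ht)]
    (lamK : Measure ↥(K.subgroupOf Ht)) [lamK.IsHaarMeasure] :
    -- `H` is closed in `H̃`
    IsClosed ((K.subgroupOf Ht : Subgroup ↥Ht) : Set ↥Ht) ∧
    -- `H` is cocompact in `H̃`
    CompactSpace (↥Ht ⧸ K.subgroupOf Ht) ∧
    -- the modular function of `H` is `[[s,b],[0,1]] ↦ s⁻¹`, which is exactly the restriction
    -- to `H` of the modular function of `H̃`
    (∀ g : ↥(K.subgroupOf Ht), Measure.map (fun x => x * g⁻¹) lamK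
      = ENNReal.ofReal (((((g : ↥Ht) : GL (Fin 2) ℝ) : Matrix (Fin 2) (Fin 2) ℝ) 0 0)⁻¹)
          • lamK) := by
  obtain rfl : Ht = affineGroup := Subgroup.ext hHt
  obtain rfl : K = affineLattice (Real.log s₀) :=
    Subgroup.ext fun M => (hK M).trans (mem_affineLattice_log_iff hs₀pos M).symm
  have ht : Real.log s₀ ≠ 0 := Real.log_ne_zero_of_pos_of_ne_one hs₀pos hs₀
  refine ⟨isClosed_latticeIn _, compactSpace_quotient_latticeIn ht, fun g => ?_⟩
  have := locallyCompactSpace_latticeIn ht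
  have := isHaarMeasure_latticeHaar ht
  rw [Measure.map_mul_right_eq_smul_of_isHaarMeasure lamK (latticeHaar _)
      (map_mul_right_latticeHaar g⁻¹),
    Subgroup.coe_inv, Subgroup.coe_inv, affineGroup.inv_apply_zero_zero g.1.2]

/-- for `s₀ ≠ 1`, the subgroup `H = {[[s₀ⁿ, b],[0,1]] : n ∈ ℤ, b ∈ ℝ}` is a
closed cocompact subgroup of the `ax+b` group `H̃ = {[[s,b],[0,1]] : s > 0, b ∈ ℝ}`, and the
modular function of `H̃` restricted to `H` equals the modular function of `H` (both given by
`[[s,b],[0,1]] ↦ s⁻¹`). -/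
theorem stmt6 (s₀ : ℝ) (hs₀pos : 0 < s₀) (hs₀ : s₀ ≠ 1)
    (Ht K : Subgroup (GL (Fin 2) ℝ))
    (hHt : ∀ M : GL (Fin 2) ℝ, M ∈ Ht ↔
      ((M : Matrix (Fin 2) (Fin 2) ℝ) 1 0 = 0 ∧
       (M : Matrix (Fin 2) (Fin 2) ℝ) 1 1 = 1 ∧
       0 < (M : Matrix (Fin 2) (Fin 2) ℝ) 0 0))
    (hK : ∀ M : GL (Fin 2) ℝ, M ∈ K ↔
      ((M : Matrix (Fin 2) (Fin 2) ℝ) 1 0 = 0 ∧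
       (M : Matrix (Fin 2) (Fin 2) ℝ) 1 1 = 1 ∧
       ∃ n : ℤ, (M : Matrix (Fin 2) (Fin 2) ℝ) 0 0 = s₀ ^ n))
    (hle : K ≤ Ht)
    [MeasurableSpace ↥(K.subgroupOf Ht)] [BorelSpace ↥(K.subgroupOf Ht)]
    (lamK : Measure ↥(K.subgroupOf Ht)) [lamK.IsHaarMeasure] :
    -- `H` is closed in `H̃`
    IsClosed ((K.subgroupOf Ht : Subgroup ↥Ht) : Set ↥Ht) ∧
    -- `H` is cocompact in `H̃`
    CompactSpace (↥Ht ⧸ K.subgroupOf Ht) ∧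
    -- the modular function of `H` is `[[s,b],[0,1]] ↦ s⁻¹`, which is exactly the restriction
    -- to `H` of the modular function of `H̃`
    (∀ g : ↥(K.subgroupOf Ht), Measure.map (fun x => x * g⁻¹) lamK
      = ENNReal.ofReal (((((g : ↥Ht) : GL (Fin 2) ℝ) : Matrix (Fin 2) (Fin 2) ℝ) 0 0)⁻¹)
          • lamK) :=
  stmt6_general s₀ hs₀pos hs₀ Ht K hHt hK lamK
end

section
/- Let G ↷ (X, μ) be a non-singular action with a cross section X₀ ⊂ X (i.e. there is an open identity neighbourhood U ⊂ G with θ|: U × X₀ → X injective and G·X₀ conull). Then the relation ℛ_{X₀} := {(x, x') ∈ X₀ × X₀ : x' ∈ G·x} is a Borel equivalence relation on X₀ with countable equivalence classes. -/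
open MeasureTheory Set Topology

/-!
Injectivity of the action on `U × X₀` says that in the set of return times `{g | g • x ∈ X₀}`
each `g` is isolated by its neighbourhood `U g`; a discrete subset of a second countable group
is countable. For Borelness, cover `G` by countably many translates `t U`: on `U × X₀` the Borel
map `(u, x) ↦ (x, t u • x)` is injective, so its image is Borel by Lusin–Souslin. This needs `G`
Polish. Injectivity at a point of `X₀` together with Borelness of its stabilizer shows that only
`1` is inseparable from `1`, so `G` is Hausdorff, and a locally compact group is complete for its
right uniformity.
-/

theorem IsTopologicalGroup.isCompletelyMetrizableSpace (G : Type*) [Group G] [TopologicalSpace G]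
    [IsTopologicalGroup G] [WeaklyLocallyCompactSpace G] [FirstCountableTopology G] [T0Space G] :
    TopologicalSpace.IsCompletelyMetrizableSpace G := by
  let := IsTopologicalGroup.rightUniformSpace G
  have : IsRightUniformGroup G := ⟨rfl⟩
  have : CompleteSpace G := IsRightUniformGroup.completeSpace_of_weaklyLocallyCompactSpace
  have : (uniformity G).IsCountablyGenerated := Filter.comap.isCountablyGenerated _ _
  infer_instance

section Action

variable {G X : Type*} [Group G] [MulAction G X]

theorem eq_one_of_inseparable_one_of_injOn_smul [TopologicalSpace G] [MeasurableSpace G]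
    [BorelSpace G] [MeasurableSpace X] [MeasurableSingletonClass X] {x : X}
    (hmeas : Measurable fun g : G => g • x) {U : Set G} (hU : U ∈ 𝓝 1)
    (hinj : InjOn (fun g : G => g • x) U) {g : G} (hg : Inseparable g 1) : g = 1 := by
  have hgU : g ∈ U := mem_of_mem_nhds (hg.nhds_eq ▸ hU)
  have hfix : g • x = x :=
    (hg.mem_measurableSet_iff (hmeas (measurableSet_singleton x))).2 (one_smul G x)
  exact hinj hgU (mem_of_mem_nhds hU) (by simpa using hfix)

theorem t2Space_of_injOn_smul [TopologicalSpace G] [IsTopologicalGroup G] [MeasurableSpace G]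
    [BorelSpace G] [MeasurableSpace X] [MeasurableSingletonClass X] {x : X}
    (hmeas : Measurable fun g : G => g • x) {U : Set G} (hU : U ∈ 𝓝 1)
    (hinj : InjOn (fun g : G => g • x) U) : T2Space G := by
  have : T0Space G := t0Space_iff_inseparable G |>.2 fun a b hab => by
    have h : Inseparable (b⁻¹ * a) 1 := by
      simpa using hab.map (continuous_const_mul b⁻¹)
    exact (inv_mul_eq_one.1 (eq_one_of_inseparable_one_of_injOn_smul hmeas hU hinj h)).symm
  infer_instance

variable {U : Set G} {X₀ : Set X}

theorem eq_of_smul_mem_of_mul_inv_mem (hinj : InjOn (fun p : G × X => p.1 • p.2) (U ×ˢ X₀))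
    (hU : (1 : G) ∈ U) {x : X} {g h : G} (hg : g • x ∈ X₀) (hh : h • x ∈ X₀)
    (hgh : h * g⁻¹ ∈ U) : h = g := by
  have : (h * g⁻¹, g • x) = ((1 : G), h • x) :=
    hinj ⟨hgh, hg⟩ ⟨hU, hh⟩ (by simp [mul_smul])
  simpa [mul_inv_eq_one] using congrArg Prod.fst this

variable [TopologicalSpace G] [ContinuousMul G] [SecondCountableTopology G]

theorem countable_setOf_smul_mem_of_injOn (hU : IsOpen U) (hU1 : (1 : G) ∈ U)
    (hinj : InjOn (fun p : G × X => p.1 • p.2) (U ×ˢ X₀)) (x : X) :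
    {g : G | g • x ∈ X₀}.Countable := by
  refine (HereditarilyLindelofSpace.isLindelof _).countable ?_
  refine discreteTopology_subtype_iff'.2 fun g hg => ⟨(· * g⁻¹) ⁻¹' U,
    hU.preimage (continuous_mul_const _), ?_⟩
  ext h
  simp only [mem_inter_iff, mem_preimage, mem_singleton_iff]
  constructor
  · rintro ⟨hgh, hh⟩
    exact eq_of_smul_mem_of_mul_inv_mem hinj hU1 hg hh hgh
  · rintro rfl
    simpa using ⟨hU1, hg⟩

theorem exists_countable_iUnion_preimage_mul_left_eq_univ (hU : U ∈ 𝓝 (1 : G)) :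
    ∃ T : Set G, T.Countable ∧ ⋃ t ∈ T, (t⁻¹ * ·) ⁻¹' U = univ :=
  countable_cover_nhds fun t => (continuous_const_mul t⁻¹).continuousAt.preimage_mem_nhds
    (by simpa using hU)

theorem measurableSet_setOf_smul_eq_of_injOn [MeasurableSpace G] [BorelSpace G]
    [StandardBorelSpace G] [MeasurableSpace X] [StandardBorelSpace X]
    (hact : Measurable fun p : G × X => p.1 • p.2) (hX₀ : MeasurableSet X₀)
    (hU : IsOpen U) (hU1 : (1 : G) ∈ U) (hinj : InjOn (fun p : G × X => p.1 • p.2) (U ×ˢ X₀)) :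
    MeasurableSet {p : X × X | p.1 ∈ X₀ ∧ p.2 ∈ X₀ ∧ ∃ g : G, g • p.1 = p.2} := by
  obtain ⟨T, hT, hTG⟩ := exists_countable_iUnion_preimage_mul_left_eq_univ (hU.mem_nhds hU1)
  set F : G → G × X → X × X := fun t p => (p.2, (t * p.1) • p.2)
  have hF_meas (t : G) : Measurable (F t) :=
    measurable_snd.prodMk (hact.comp ((measurable_fst.const_mul t).prodMk measurable_snd))
  have hF_inj (t : G) : InjOn (F t) (U ×ˢ X₀) := fun p hp q hq hpq => by
    simp only [F, Prod.mk.injEq, mul_smul] at hpq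
    exact hinj hp hq (smul_left_cancel t hpq.2)
  have hR : {p : X × X | p.1 ∈ X₀ ∧ p.2 ∈ X₀ ∧ ∃ g : G, g • p.1 = p.2} =
      (X₀ ×ˢ X₀) ∩ ⋃ t ∈ T, F t '' (U ×ˢ X₀) := by
    ext ⟨x, y⟩
    simp only [F, mem_ofPred_eq, mem_inter_iff, mem_prod, mem_iUnion, mem_image, Prod.exists,
      Prod.mk.injEq, exists_prop]
    constructor
    · rintro ⟨hx, hy, g, rfl⟩
      obtain ⟨t, ht, hg⟩ := mem_iUnion₂.1 (hTG ▸ mem_univ g)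
      exact ⟨⟨hx, hy⟩, t, ht, t⁻¹ * g, x, ⟨hg, hx⟩, rfl, by simp⟩
    · rintro ⟨⟨hx, hy⟩, t, -, u, x, -, rfl, rfl⟩
      exact ⟨hx, hy, t * u, rfl⟩
  rw [hR]
  exact (hX₀.prod hX₀).inter <| .biUnion hT fun t _ =>
    (hU.measurableSet.prod hX₀).image_of_measurable_injOn (hF_meas t) (hF_inj t)

end Action

theorem stmt19_general {G X : Type*} [Group G] [TopologicalSpace G] [IsTopologicalGroup G]
    [LocallyCompactSpace G] [SecondCountableTopology G] [MeasurableSpace G] [BorelSpace G]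
    [MeasurableSpace X] [StandardBorelSpace X] [MulAction G X]
    (hactmeas : Measurable fun p : G × X => p.1 • p.2)
    (X₀ : Set X) (hX₀ : MeasurableSet X₀)
    (U : Set G) (hU : IsOpen U) (hUe : (1 : G) ∈ U)
    (hinj : Set.InjOn (fun p : G × X => p.1 • p.2) (U ×ˢ X₀)) :
    -- `ℛ_{X₀}` is Borel
    MeasurableSet {p : X × X | p.1 ∈ X₀ ∧ p.2 ∈ X₀ ∧ ∃ g : G, g • p.1 = p.2} ∧
    -- it is an equivalence relation on `X₀`
    Equivalence (fun x y : X₀ => ∃ g : G, g • (x : X) = (y : X)) ∧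
    -- with countable classes
    (∀ x : X, {y : X | y ∈ X₀ ∧ ∃ g : G, g • x = y}.Countable) := by
  refine ⟨?_, ⟨fun _ => ⟨1, one_smul G _⟩, ?_, ?_⟩, fun x => ?_⟩
  · rcases X₀.eq_empty_or_nonempty with rfl | ⟨x₀, hx₀⟩
    · simp
    have : T2Space G := t2Space_of_injOn_smul (hactmeas.comp measurable_prodMk_right)
      (hU.mem_nhds hUe) fun a ha b hb hab =>
        congrArg Prod.fst (hinj (mk_mem_prod ha hx₀) (mk_mem_prod hb hx₀) hab)
    have := IsTopologicalGroup.isCompletelyMetrizableSpace G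
    exact measurableSet_setOf_smul_eq_of_injOn hactmeas hX₀ hU hUe hinj
  · rintro x y ⟨g, hg⟩
    exact ⟨g⁻¹, by rw [← hg, inv_smul_smul]⟩
  · rintro x y z ⟨g, hg⟩ ⟨h, hh⟩
    exact ⟨h * g, by rw [mul_smul, hg, hh]⟩
  · refine (countable_setOf_smul_mem_of_injOn hU hUe hinj x).image (· • x) |>.mono ?_
    rintro _ ⟨hy, g, rfl⟩
    exact ⟨g, hy, rfl⟩

/-- if `X₀` is a cross section for a non-singular action `G ↷ (X, μ)` (i.e.
the action map is injective on `U × X₀` for some open identity neighbourhood `U ⊂ G` and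
`G·X₀` is conull), then `ℛ_{X₀} = {(x, x') ∈ X₀ × X₀ : x' ∈ G·x}` is a Borel equivalence
relation on `X₀` with countable classes. -/
theorem stmt19 {G X : Type*} [Group G] [TopologicalSpace G] [IsTopologicalGroup G]
    [LocallyCompactSpace G] [SecondCountableTopology G] [MeasurableSpace G] [BorelSpace G]
    [MeasurableSpace X] [StandardBorelSpace X] [MulAction G X]
    (hactmeas : Measurable fun p : G × X => p.1 • p.2)
    (μ : Measure X) [IsProbabilityMeasure μ]
    (X₀ : Set X) (hX₀ : MeasurableSet X₀)
    (U : Set G) (hU : IsOpen U) (hUe : (1 : G) ∈ U)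
    (hinj : Set.InjOn (fun p : G × X => p.1 • p.2) (U ×ˢ X₀))
    (hconull : μ {x : X | ∃ g : G, ∃ x₀ ∈ X₀, g • x₀ = x}ᶜ = 0) :
    -- `ℛ_{X₀}` is Borel
    MeasurableSet {p : X × X | p.1 ∈ X₀ ∧ p.2 ∈ X₀ ∧ ∃ g : G, g • p.1 = p.2} ∧
    -- it is an equivalence relation on `X₀`
    Equivalence (fun x y : X₀ => ∃ g : G, g • (x : X) = (y : X)) ∧
    -- with countable classes
    (∀ x : X, {y : X | y ∈ X₀ ∧ ∃ g : G, g • x = y}.Countable) :=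
  stmt19_general hactmeas X₀ hX₀ U hU hUe hinj
end
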